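/- arXiv:1804.00474 — 2 statements merged into one kernel-verified Lean document; each statement's English description precedes it below -/
import Mathlib

section
/- Let l ≥ 0 be an integer and φ : [1,∞) → (0,∞) slowly varying (measurable, locally bounded and bounded away from zero). If ∫₁^∞ dt/(t φ(t)²) < ∞, then every element of H^{l+n/2, φ}(ℝⁿ) coincides almost everywhere with a function of class C^l(ℝⁿ), and the embedding H^{l+n/2,φ}(ℝⁿ) ⊂ C^l_b(ℝⁿ) (functions with bounded continuous derivatives up to order l) is continuous. -/
open Filter Topology MeasureTheory FourierTransform

/-- Slowly varying at infinity in the sense of Karamata. -/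
def SlowlyVarying (φ : ℝ → ℝ) : Prop :=
  ∀ l : ℝ, 0 < l → Tendsto (fun t => φ (l * t) / φ t) atTop (𝓝 1)

/-- Borel measurable, positive, bounded and bounded away from zero on compact
subintervals of `[1,∞)`, and slowly varying at infinity. -/
def GoodWeight (φ : ℝ → ℝ) : Prop :=
  Measurable φ ∧ (∀ t, 1 ≤ t → 0 < φ t) ∧
  (∀ b : ℝ, 1 ≤ b → ∃ c C : ℝ, 0 < c ∧ ∀ t ∈ Set.Icc 1 b, c ≤ φ t ∧ φ t ≤ C) ∧
  SlowlyVarying φ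

/-- The smoothed modulus `⟨ξ⟩ = (1 + |ξ|²)^{1/2}`. -/
noncomputable def smod {n : ℕ} (ξ : EuclideanSpace ℝ (Fin n)) : ℝ :=
  Real.sqrt (1 + ‖ξ‖ ^ 2)

/-- The Hörmander weight `⟨ξ⟩^{2s} φ(⟨ξ⟩)²`. -/
noncomputable def hWeight {n : ℕ} (s : ℝ) (φ : ℝ → ℝ)
    (ξ : EuclideanSpace ℝ (Fin n)) : ℝ :=
  smod ξ ^ (2 * s) * (φ (smod ξ)) ^ 2

/-- The squared Hörmander norm of an element of `H^{s,φ}(ℝⁿ)`, described via its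
Fourier transform `g = ŵ`:  `∫ ⟨ξ⟩^{2s} φ(⟨ξ⟩)² |ŵ(ξ)|² dξ`. -/
noncomputable def hNormSq {n : ℕ} (s : ℝ) (φ : ℝ → ℝ)
    (g : EuclideanSpace ℝ (Fin n) → ℂ) : ℝ :=
  ∫ ξ, hWeight s φ ξ * ‖g ξ‖ ^ 2

/-- Membership of a tempered distribution `w` in `H^{s,φ}(ℝⁿ)`, described via its
Fourier transform `g = ŵ` (a locally integrable function): the weighted square
integral is finite. -/
def MemH {n : ℕ} (s : ℝ) (φ : ℝ → ℝ) (g : EuclideanSpace ℝ (Fin n) → ℂ) : Prop :=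
  AEStronglyMeasurable g volume ∧
    Integrable (fun ξ => hWeight s φ ξ * ‖g ξ‖ ^ 2) volume

/-!
The inverse Fourier transform of `g` is `C^l` with `‖D^i (𝓕⁻ g)‖ ≤ (2π)^i ∫ |ξ|^i |g ξ| dξ`, so
it suffices to bound `∫ ⟨ξ⟩^l |g ξ| dξ`. By Cauchy–Schwarz against the weight
`⟨ξ⟩^n φ(⟨ξ⟩)²`, this is at most `‖(⟨ξ⟩^n φ(⟨ξ⟩)²)⁻¹‖_{L¹}^{1/2}` times the Hörmander norm of `g`
in `H^{l+n/2,φ}`. In polar coordinates, followed by the substitution `t = ⟨r⟩`, the `L¹` norm of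
`(⟨ξ⟩^n φ(⟨ξ⟩)²)⁻¹` is controlled by `∫₁^∞ dt/(t φ(t)²)`.
-/

open Set

theorem integrableOn_Ici_one_iff_comp_sqrt_one_add_sq {F : Type*} [NormedAddCommGroup F]
    [NormedSpace ℝ F] (g : ℝ → F) :
    IntegrableOn g (Ici 1) ↔
      IntegrableOn (fun r => (r / √(1 + r ^ 2)) • g √(1 + r ^ 2)) (Ici 0) := by
  have himage : (fun r : ℝ => √(1 + r ^ 2)) '' Ici 0 = Ici 1 := by
    ext t
    refine ⟨?_, fun (ht : 1 ≤ t) => ⟨√(t ^ 2 - 1), Real.sqrt_nonneg _, ?_⟩⟩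
    · rintro ⟨r, -, rfl⟩
      exact Real.one_le_sqrt.2 (by nlinarith)
    · dsimp only
      rw [Real.sq_sqrt (by nlinarith), add_sub_cancel, Real.sqrt_sq (by linarith)]
  have hderiv : ∀ r ∈ Ici (0 : ℝ),
      HasDerivWithinAt (fun r : ℝ => √(1 + r ^ 2)) (r / √(1 + r ^ 2)) (Ici 0) r := by
    intro r _
    have h := ((hasDerivAt_pow 2 r).const_add 1).sqrt (by positivity)
    refine (h.congr_deriv ?_).hasDerivWithinAt
    field_simp
    ring
  have hmono : MonotoneOn (fun r : ℝ => √(1 + r ^ 2)) (Ici 0) := fun a ha b _ hab =>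
    Real.sqrt_le_sqrt (by gcongr)
  rw [← himage, integrableOn_image_iff_integrableOn_deriv_smul_of_monotoneOn measurableSet_Ici
    hderiv hmono]

section RadialWeight

variable {φ : ℝ → ℝ} (hφ : Measurable φ) {c : ℝ} (hc : 0 < c) (hφc : ∀ t ∈ Icc 1 √2, c ≤ φ t)
  (hint : IntegrableOn (fun t => (t * φ t ^ 2)⁻¹) (Ici 1))
include hφ hc hφc hint

/- The substitution `t = √(1 + r²)` degenerates at `r = 0`; on `(0, 1]` the lower bound `c ≤ φ`
is used instead. -/
theorem integrableOn_Ioi_pow_mul_inv_sqrt_one_add_sq_pow (k : ℕ) :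
    IntegrableOn (fun r : ℝ => r ^ k * (√(1 + r ^ 2) ^ (k + 1) * φ √(1 + r ^ 2) ^ 2)⁻¹)
      (Ioi 0) := by
  have hmeas : Measurable fun r : ℝ =>
      r ^ k * (√(1 + r ^ 2) ^ (k + 1) * φ √(1 + r ^ 2) ^ 2)⁻¹ := by
    fun_prop
  refine IntegrableOn.mono_set ?_ (Ioi_subset_Ioc_union_Ici (b := 1))
  refine IntegrableOn.union ?_ ?_
  · refine Integrable.mono' (integrableOn_const (C := (c ^ 2)⁻¹) measure_Ioc_lt_top.ne)
      hmeas.aestronglyMeasurable.restrict ?_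
    filter_upwards [ae_restrict_mem measurableSet_Ioc] with r ⟨hr0, hr1⟩
    have h1 : 1 ≤ √(1 + r ^ 2) := Real.one_le_sqrt.2 (by nlinarith)
    have hc' : c ≤ φ √(1 + r ^ 2) := hφc _ ⟨h1, Real.sqrt_le_sqrt (by nlinarith)⟩
    rw [Real.norm_of_nonneg (by positivity)]
    calc r ^ k * (√(1 + r ^ 2) ^ (k + 1) * φ √(1 + r ^ 2) ^ 2)⁻¹ ≤ 1 * (1 * c ^ 2)⁻¹ := by
          gcongr
          · exact pow_le_one₀ hr0.le hr1
          · exact one_le_pow₀ h1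
      _ = (c ^ 2)⁻¹ := by simp
  · have hsub := ((integrableOn_Ici_one_iff_comp_sqrt_one_add_sq _).1 hint).mono_set
      (Ici_subset_Ici.2 zero_le_one)
    refine Integrable.mono' (hsub.const_mul √2) hmeas.aestronglyMeasurable.restrict ?_
    filter_upwards [ae_restrict_mem measurableSet_Ici] with r (hr : 1 ≤ r)
    set ρ := √(1 + r ^ 2)
    have hrρ : r ≤ ρ := Real.le_sqrt_of_sq_le (by linarith)
    have hρr : ρ ≤ √2 * r := by
      rw [← Real.sqrt_sq (by linarith : 0 ≤ r), ← Real.sqrt_mul zero_le_two]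
      exact Real.sqrt_le_sqrt (by nlinarith)
    have hρ : 0 < ρ := by linarith
    have hquot : r ^ k / ρ ^ (k + 1) ≤ √2 * r / ρ ^ 2 := by
      rw [div_le_div_iff₀ (by positivity) (by positivity)]
      calc r ^ k * ρ ^ 2 = r ^ k * ρ * ρ := by ring
        _ ≤ r ^ k * (√2 * r) * ρ := by gcongr
        _ = √2 * r * (r ^ k * ρ) := by ring
        _ ≤ √2 * r * (ρ ^ k * ρ) := by gcongr
        _ = √2 * r * ρ ^ (k + 1) := by ring
    rw [Real.norm_of_nonneg (by positivity), smul_eq_mul]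
    calc r ^ k * (ρ ^ (k + 1) * φ ρ ^ 2)⁻¹ = r ^ k / ρ ^ (k + 1) * (φ ρ ^ 2)⁻¹ := by ring
      _ ≤ √2 * r / ρ ^ 2 * (φ ρ ^ 2)⁻¹ := by gcongr
      _ = √2 * (r / ρ * (ρ * φ ρ ^ 2)⁻¹) := by ring

theorem integrable_inv_sqrt_one_add_norm_sq_pow_finrank_mul {E : Type*} [NormedAddCommGroup E]
    [NormedSpace ℝ E] [FiniteDimensional ℝ E] [MeasurableSpace E] [BorelSpace E]
    (μ : Measure E) [μ.IsAddHaarMeasure] :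
    Integrable (fun x : E =>
      (√(1 + ‖x‖ ^ 2) ^ Module.finrank ℝ E * φ √(1 + ‖x‖ ^ 2) ^ 2)⁻¹) μ := by
  rcases subsingleton_or_nontrivial E with hE | hE
  · exact Integrable.of_finite
  obtain ⟨k, hk⟩ := Nat.exists_eq_add_one.2 (Module.finrank_pos (R := ℝ) (M := E))
  rw [integrable_fun_norm_addHaar μ
    (f := fun r => (√(1 + r ^ 2) ^ Module.finrank ℝ E * φ √(1 + r ^ 2) ^ 2)⁻¹)]
  simpa only [hk, add_tsub_cancel_right, smul_eq_mul]
    using integrableOn_Ioi_pow_mul_inv_sqrt_one_add_sq_pow hφ hc hφc hint k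

end RadialWeight

section WeightedCauchySchwarz

variable {α : Type*} [MeasurableSpace α] {μ : Measure α}

theorem MeasureTheory.Integrable.memLp_two_sqrt {g : α → ℝ} (hg : Integrable g μ)
    (hg0 : ∀ x, 0 ≤ g x) :
    MemLp (fun x => √(g x)) 2 μ := by
  refine (memLp_two_iff_integrable_sq (Real.continuous_sqrt.comp_aestronglyMeasurable hg.1)).2 ?_
  simpa only [Real.sq_sqrt (hg0 _)] using hg

theorem integrable_and_integral_le_of_weighted_sq {w f : α → ℝ}
    (hfm : AEStronglyMeasurable f μ) (hw : ∀ x, 0 < w x) (hw' : Integrable (fun x => (w x)⁻¹) μ)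
    (hwf : Integrable (fun x => w x * f x ^ 2) μ) :
    Integrable f μ ∧ ∫ x, f x ∂μ ≤ √(∫ x, (w x)⁻¹ ∂μ) * √(∫ x, w x * f x ^ 2 ∂μ) := by
  have hw0 : ∀ x, 0 ≤ (w x)⁻¹ := fun x => (inv_pos.2 (hw x)).le
  have hwf0 : ∀ x, 0 ≤ w x * f x ^ 2 := fun x => mul_nonneg (hw x).le (sq_nonneg _)
  have hfactor : ∀ x, |f x| = √((w x)⁻¹) * √(w x * f x ^ 2) := fun x => by
    rw [← Real.sqrt_mul (hw0 x), inv_mul_cancel_left₀ (hw x).ne', Real.sqrt_sq_eq_abs]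
  have ha := hw'.memLp_two_sqrt hw0
  have hb := hwf.memLp_two_sqrt hwf0
  have hab : Integrable (fun x => √((w x)⁻¹) * √(w x * f x ^ 2)) μ := ha.integrable_mul hb
  have hf : Integrable f μ :=
    hab.mono' hfm (ae_of_all _ fun x => (Real.norm_eq_abs _).trans_le (hfactor x).le)
  refine ⟨hf, ?_⟩
  rw [← ENNReal.ofReal_ofNat] at ha hb
  have hholder := integral_mul_le_Lp_mul_Lq_of_nonneg Real.HolderConjugate.two_two
    (ae_of_all _ fun x => Real.sqrt_nonneg _) (ae_of_all _ fun x => Real.sqrt_nonneg _) ha hb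
  simp only [Real.rpow_two, Real.sq_sqrt (hw0 _), Real.sq_sqrt (hwf0 _),
    ← Real.sqrt_eq_rpow] at hholder
  refine le_trans (integral_mono hf hab fun x => ?_) hholder
  exact (le_abs_self _).trans (hfactor x).le

end WeightedCauchySchwarz

section Fourier

variable {V E : Type*} [NormedAddCommGroup V] [InnerProductSpace ℝ V] [FiniteDimensional ℝ V]
  [MeasurableSpace V] [BorelSpace V] [NormedAddCommGroup E] [NormedSpace ℂ E] {f : V → E}
  {N : ℕ∞} (hf : ∀ n : ℕ, n ≤ N → Integrable (fun v => ‖v‖ ^ n * ‖f v‖))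
include hf

theorem contDiff_fourierInv : ContDiff ℝ N (𝓕⁻ f) := by
  rw [Real.fourierInv_eq_fourier_comp_neg]
  exact Real.contDiff_fourier fun n hn => by simpa only [norm_neg] using (hf n hn).comp_neg

theorem norm_iteratedFDeriv_fourier_le (h'f : AEStronglyMeasurable f) {n : ℕ} (hn : n ≤ N)
    (w : V) : ‖iteratedFDeriv ℝ n (𝓕 f) w‖ ≤ (2 * Real.pi) ^ n * ∫ v, ‖v‖ ^ n * ‖f v‖ := by
  rw [Real.iteratedFDeriv_fourier hf h'f hn, ← integral_const_mul]
  refine (VectorFourier.norm_fourierIntegral_le_integral_norm _ _ _ _ _).trans <|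
    integral_mono_of_nonneg (ae_of_all _ fun v => norm_nonneg _)
      ((hf n hn).const_mul _) (ae_of_all _ fun v => ?_)
  calc ‖VectorFourier.fourierPowSMulRight (innerSL ℝ) f v n‖
      ≤ (2 * Real.pi * ‖innerSL ℝ (E := V)‖) ^ n * ‖v‖ ^ n * ‖f v‖ :=
        VectorFourier.norm_fourierPowSMulRight_le _ _ _ _
    _ ≤ (2 * Real.pi * 1) ^ n * ‖v‖ ^ n * ‖f v‖ := by gcongr; exact norm_innerSL_le ℝ
    _ = (2 * Real.pi) ^ n * (‖v‖ ^ n * ‖f v‖) := by ring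

theorem norm_iteratedFDeriv_fourierInv_le (h'f : AEStronglyMeasurable f) {n : ℕ} (hn : n ≤ N)
    (w : V) : ‖iteratedFDeriv ℝ n (𝓕⁻ f) w‖ ≤ (2 * Real.pi) ^ n * ∫ v, ‖v‖ ^ n * ‖f v‖ := by
  rw [Real.fourierInv_eq_fourier_comp_neg]
  have hf_neg : ∀ n : ℕ, n ≤ N → Integrable (fun v => ‖v‖ ^ n * ‖f (-v)‖) := fun n hn => by
    simpa only [norm_neg] using (hf n hn).comp_neg
  refine (norm_iteratedFDeriv_fourier_le hf_neg (h'f.comp_measurePreserving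
    (Measure.measurePreserving_neg _)) hn w).trans_eq ?_
  rw [← integral_neg_eq_self (fun v => ‖v‖ ^ n * ‖f v‖)]
  simp only [norm_neg]

end Fourier

section HoermanderSpace

variable {n : ℕ}

theorem one_le_smod (ξ : EuclideanSpace ℝ (Fin n)) : 1 ≤ smod ξ :=
  Real.one_le_sqrt.2 (by nlinarith [norm_nonneg ξ])

theorem norm_le_smod (ξ : EuclideanSpace ℝ (Fin n)) : ‖ξ‖ ≤ smod ξ :=
  Real.le_sqrt_of_sq_le (by linarith)

theorem norm_pow_le_smod_pow {i l : ℕ} (hi : i ≤ l) (ξ : EuclideanSpace ℝ (Fin n)) :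
    ‖ξ‖ ^ i ≤ smod ξ ^ l :=
  (pow_le_pow_left₀ (norm_nonneg ξ) (norm_le_smod ξ) i).trans
    (pow_le_pow_right₀ (one_le_smod ξ) hi)

theorem continuous_smod : Continuous (smod : EuclideanSpace ℝ (Fin n) → ℝ) := by
  unfold smod
  fun_prop

theorem hWeight_natCast_add_half (l : ℕ) (φ : ℝ → ℝ) (ξ : EuclideanSpace ℝ (Fin n)) :
    hWeight ((l : ℝ) + n / 2) φ ξ = smod ξ ^ (2 * l + n) * φ (smod ξ) ^ 2 := by
  have hexp : 2 * ((l : ℝ) + n / 2) = ((2 * l + n : ℕ) : ℝ) := by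
    push_cast
    ring
  rw [hWeight, hexp, Real.rpow_natCast]

variable {φ : ℝ → ℝ} (hφ : GoodWeight φ)
  (hint : IntegrableOn (fun t : ℝ => (t * (φ t) ^ 2)⁻¹) (Set.Ici 1) volume)
include hφ hint

theorem GoodWeight.integrable_inv_smod_pow_mul_sq :
    Integrable (fun ξ : EuclideanSpace ℝ (Fin n) => (smod ξ ^ n * φ (smod ξ) ^ 2)⁻¹) := by
  obtain ⟨c, _C, hc, hφc⟩ := hφ.2.2.1 √2 (Real.one_le_sqrt.2 one_le_two)
  have h := integrable_inv_sqrt_one_add_norm_sq_pow_finrank_mul hφ.1 hc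
    (fun t ht => (hφc t ht).1) hint (volume : Measure (EuclideanSpace ℝ (Fin n)))
  rwa [finrank_euclideanSpace_fin] at h

theorem MemH.integrable_and_integral_smod_pow_mul_norm_le {l : ℕ}
    {g : EuclideanSpace ℝ (Fin n) → ℂ} (hg : MemH ((l : ℝ) + n / 2) φ g) :
    Integrable (fun ξ => smod ξ ^ l * ‖g ξ‖) ∧
      ∫ ξ, smod ξ ^ l * ‖g ξ‖ ≤ √(∫ ξ : EuclideanSpace ℝ (Fin n), (smod ξ ^ n * φ (smod ξ) ^ 2)⁻¹) *
        √(hNormSq ((l : ℝ) + n / 2) φ g) := by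
  have hweight : ∀ ξ : EuclideanSpace ℝ (Fin n), smod ξ ^ n * φ (smod ξ) ^ 2 *
      (smod ξ ^ l * ‖g ξ‖) ^ 2 = hWeight ((l : ℝ) + n / 2) φ ξ * ‖g ξ‖ ^ 2 := fun ξ => by
    rw [hWeight_natCast_add_half]
    ring
  have hpos : ∀ ξ : EuclideanSpace ℝ (Fin n), 0 < smod ξ ^ n * φ (smod ξ) ^ 2 := fun ξ =>
    have := hφ.2.1 _ (one_le_smod ξ)
    mul_pos (pow_pos (by linarith [one_le_smod ξ]) n) (by positivity)
  simpa only [hweight, hNormSq] using integrable_and_integral_le_of_weighted_sq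
    (f := fun ξ => smod ξ ^ l * ‖g ξ‖)
    ((continuous_smod.pow l).aestronglyMeasurable.mul hg.1.norm) hpos
    (hφ.integrable_inv_smod_pow_mul_sq hint) (by simpa only [hweight] using hg.2)

end HoermanderSpace

/-- Hörmander embedding theorem: if `∫₁^∞ dt/(t φ(t)²) < ∞`, then every element of
`H^{l+n/2,φ}(ℝⁿ)` (described by its Fourier transform `g`, the element itself being
the inverse Fourier transform of `g`) coincides a.e. with a function of class `C^l`
whose derivatives up to order `l` are bounded, and the embedding
`H^{l+n/2,φ}(ℝⁿ) ⊂ C^l_b(ℝⁿ)` is continuous. -/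
theorem hoermander_embedding (n l : ℕ) (φ : ℝ → ℝ) (hφ : GoodWeight φ)
    (hint : IntegrableOn (fun t : ℝ => (t * (φ t) ^ 2)⁻¹) (Set.Ici 1) volume) :
    ∃ C : ℝ, 0 < C ∧ ∀ g : EuclideanSpace ℝ (Fin n) → ℂ,
      MemH ((l : ℝ) + n / 2) φ g →
      ∃ u : EuclideanSpace ℝ (Fin n) → ℂ,
        ContDiff ℝ (l : ℕ∞) u ∧
        u =ᵐ[volume] 𝓕⁻ g ∧
        ∀ i : ℕ, i ≤ l → ∀ x, ‖iteratedFDeriv ℝ i u x‖ ≤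
          C * Real.sqrt (hNormSq ((l : ℝ) + n / 2) φ g) := by
  set K := ∫ ξ : EuclideanSpace ℝ (Fin n), (smod ξ ^ n * φ (smod ξ) ^ 2)⁻¹
  refine ⟨(2 * Real.pi) ^ l * (√K + 1), by positivity, fun g hg => ?_⟩
  obtain ⟨hL1, hL1_le⟩ := hg.integrable_and_integral_smod_pow_mul_norm_le hφ hint
  have hpointwise : ∀ i : ℕ, i ≤ l → ∀ ξ, ‖ξ‖ ^ i * ‖g ξ‖ ≤ smod ξ ^ l * ‖g ξ‖ :=
    fun i hi ξ => by gcongr; exact norm_pow_le_smod_pow hi ξ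
  have hmoment : ∀ i : ℕ, i ≤ l → Integrable (fun ξ => ‖ξ‖ ^ i * ‖g ξ‖) := fun i hi =>
    hL1.mono' ((continuous_norm.pow i).aestronglyMeasurable.mul hg.1.norm) <|
      ae_of_all _ fun ξ => (Real.norm_of_nonneg (by positivity)).trans_le (hpointwise i hi ξ)
  have hmoment' : ∀ i : ℕ, (i : ℕ∞) ≤ l → Integrable (fun ξ => ‖ξ‖ ^ i * ‖g ξ‖) := fun i hi =>
    hmoment i (mod_cast hi)
  refine ⟨𝓕⁻ g, contDiff_fourierInv hmoment', .rfl, fun i hi x => ?_⟩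
  calc ‖iteratedFDeriv ℝ i (𝓕⁻ g) x‖
      ≤ (2 * Real.pi) ^ i * ∫ ξ, ‖ξ‖ ^ i * ‖g ξ‖ :=
        norm_iteratedFDeriv_fourierInv_le hmoment' hg.1 (mod_cast hi) x
    _ ≤ (2 * Real.pi) ^ l * (√K * √(hNormSq ((l : ℝ) + n / 2) φ g)) := by
        gcongr ?_ * ?_
        · exact pow_le_pow_right₀ (by linarith [Real.pi_gt_three]) hi
        · exact (integral_mono (hmoment i hi) hL1 (hpointwise i hi)).trans hL1_le
    _ ≤ (2 * Real.pi) ^ l * (√K + 1) * √(hNormSq ((l : ℝ) + n / 2) φ g) := by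
        rw [mul_assoc]
        gcongr
        linarith
end

section
/- Let H be a Banach space and D ⊂ H a dense linear subspace. If M is a closed subspace of H of finite codimension d, then there exists a d-dimensional subspace G contained in D with H = G ⊕ M. -/
/-- Gohberg–Krein lemma: in a Banach space `H`, a closed subspace `M` of finite
codimension `d` admits a `d`-dimensional algebraic-topological complement `G`
contained in any prescribed dense subspace `D`. -/
theorem gohberg_krein_complement {H : Type*}
    [NormedAddCommGroup H] [NormedSpace ℝ H] [CompleteSpace H]
    (M D : Submodule ℝ H) (hM : IsClosed (M : Set H)) (hD : Dense (D : Set H))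
    [FiniteDimensional ℝ (H ⧸ M)] :
    ∃ G : Submodule ℝ H, G ≤ D ∧
      Module.finrank ℝ G = Module.finrank ℝ (H ⧸ M) ∧
      IsCompl G M ∧ IsClosed (G : Set H) := by
  classical
  set d := Module.finrank ℝ (H ⧸ M) with hd
  haveI : IsClosed (M : Set H) := hM
  -- the quotient map is continuous
  have hπ : Continuous (M.mkQ) := continuous_quot_mk
  -- choose a basis of the quotient and lift it
  let b : Module.Basis (Fin d) ℝ (H ⧸ M) := Module.finBasis ℝ (H ⧸ M)
  choose x hx using fun i => M.mkQ_surjective (b i)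
  -- the set of families whose image is linearly independent is open
  have hopen : IsOpen {v : Fin d → H | LinearIndependent ℝ (M.mkQ ∘ v)} := by
    have h1 := isOpen_setOf_linearIndependent (𝕜 := ℝ) (E := H ⧸ M) (ι := Fin d)
    exact h1.preimage (continuous_pi fun i => hπ.comp (continuous_apply i))
  have hxmem : x ∈ {v : Fin d → H | LinearIndependent ℝ (M.mkQ ∘ v)} := by
    have : M.mkQ ∘ x = b := by
      funext i; simp [hx i]
    simpa [this] using b.linearIndependent
  -- `D^d` is dense
  have hDdense : Dense (Set.pi Set.univ fun _ : Fin d => (D : Set H)) :=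
    dense_pi Set.univ fun _ _ => hD
  obtain ⟨y, hyD, hyli⟩ :=
    hDdense.exists_mem_open hopen ⟨x, hxmem⟩
  have hyD : ∀ i, y i ∈ D := fun i => hyD i (Set.mem_univ i)
  have hyli : LinearIndependent ℝ (M.mkQ ∘ y) := hyli
  have hyli' : LinearIndependent ℝ y := hyli.of_comp M.mkQ
  refine ⟨Submodule.span ℝ (Set.range y), ?_, ?_, ?_, ?_⟩
  · rw [Submodule.span_le]
    rintro _ ⟨i, rfl⟩
    exact hyD i
  · rw [finrank_span_eq_card hyli']
    simp
  · constructor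
    · -- disjointness
      rw [Submodule.disjoint_def]
      intro g hgG hgM
      obtain ⟨c, rfl⟩ := (Submodule.mem_span_range_iff_exists_fun ℝ).1 hgG
      have h0 : M.mkQ (∑ i, c i • y i) = 0 := by
        rwa [← Submodule.ker_mkQ M, LinearMap.mem_ker] at hgM
      have h0' : ∑ i, c i • (M.mkQ ∘ y) i = 0 := by
        simpa using h0
      have hc : ∀ i, c i = 0 := by
        have := linearIndependent_iff'.1 hyli Finset.univ c (by simpa using h0')
        exact fun i => this i (Finset.mem_univ i)
      simp [hc]
    · -- codisjointness
      rw [codisjoint_comm, codisjoint_iff, ← Submodule.map_mkQ_eq_top]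
      have hspan : Submodule.span ℝ (Set.range (M.mkQ ∘ y)) = ⊤ :=
        hyli.span_eq_top_of_card_eq_finrank' (by simp [hd])
      rw [Submodule.map_span, ← Set.range_comp, hspan]
  · haveI : FiniteDimensional ℝ (Submodule.span ℝ (Set.range y)) :=
      FiniteDimensional.span_of_finite ℝ (Set.finite_range y)
    exact Submodule.closed_of_finiteDimensional _
end
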